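/- Let X be a topological space with a continuous ℤ/2 action such that the homology H_*(X; ℤ/2) is finite-dimensional and X is a finite ℤ/2-CW complex. Then the total dimension of H_*(X^{ℤ/2}; ℤ/2), where X^{ℤ/2} is the fixed-point set, is at most the total dimension of H_*(X; ℤ/2) (the Smith inequality). -/

import Mathlib

/-!
Put `σ = τ + 1`. Freeness of the action off the fixed subcomplex `F` says `ker σ = F ⊕ σ C` as
chain complexes, so the short exact sequence `0 → ker σ → C → σ C → 0` gives, through the exactness
of `H_{k+1}(σ C) → H_k(ker σ) → H_k(C)`, the degreewise inequality
`dim H_k(F) + dim H_k(σ C) ≤ dim H_k(C) + dim H_{k+1}(σ C)`.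
Summed over `k`, the terms of `σ C` telescope, and `σ C` has no homology above the top degree.
-/

open Module Submodule LinearMap

section LinearAlgebra

variable {K : Type*} [DivisionRing K]
variable {U V W : Type*} [AddCommGroup U] [Module K U] [AddCommGroup V] [Module K V]
  [AddCommGroup W] [Module K W]

theorem Submodule.finrank_comap_subtype (p q : Submodule K V) :
    finrank K (q.comap p.subtype) = finrank K ↥(q ⊓ p) := by
  rw [← finrank_map_subtype_eq, map_comap_subtype, inf_comm]

theorem Submodule.finrank_quotient_comap_subtype {p q : Submodule K V} (hqp : q ≤ p)
    [FiniteDimensional K p] :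
    (finrank K (p ⧸ q.comap p.subtype) : ℤ) = finrank K p - finrank K q := by
  rw [← (comapSubtypeEquivOfLe hqp).finrank_eq, ← finrank_quotient_add_finrank (q.comap p.subtype)]
  push_cast
  ring

theorem Submodule.finrank_sup_of_disjoint {p q : Submodule K V} [FiniteDimensional K V]
    (h : Disjoint p q) : finrank K ↥(p ⊔ q) = finrank K p + finrank K q := by
  rw [← finrank_sup_add_finrank_inf_eq, h.eq_bot, finrank_bot, add_zero]

theorem LinearMap.finrank_map_add_finrank_ker_inf [FiniteDimensional K V] (f : V →ₗ[K] W)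
    (p : Submodule K V) : finrank K (p.map f) + finrank K ↥(ker f ⊓ p) = finrank K p := by
  rw [← range_domRestrict, ← finrank_comap_subtype, ← ker_domRestrict,
    finrank_range_add_finrank_ker]

theorem LinearMap.ker_inf_sup_eq_of_disjoint (g : V →ₗ[K] W) {p q : Submodule K V}
    {p' q' : Submodule K W} (hp : p.map g ≤ p') (hq : q.map g ≤ q') (hpq' : Disjoint p' q') :
    ker g ⊓ (p ⊔ q) = ker g ⊓ p ⊔ ker g ⊓ q := by
  refine le_antisymm (fun x hx => ?_) (sup_le (inf_le_inf_left _ le_sup_left)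
    (inf_le_inf_left _ le_sup_right))
  obtain ⟨hxg, y, hy, z, hz, rfl⟩ := And.imp_right mem_sup.mp (mem_inf.mp hx)
  have hgz : g z = -g y := eq_neg_of_add_eq_zero_right (by simpa using hxg)
  have hgy : g y = 0 := by
    refine (disjoint_def.mp hpq') _ (hp (mem_map_of_mem hy)) ?_
    rw [← neg_neg (g y), ← hgz]
    exact q'.neg_mem (hq (mem_map_of_mem hz))
  rw [hgy, neg_zero] at hgz
  exact mem_sup.mpr ⟨y, ⟨hgy, hy⟩, z, ⟨hgz, hz⟩, rfl⟩

theorem Submodule.finrank_inf_add_finrank_le [FiniteDimensional K V] {r k : Submodule K V}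
    (hrk : r ≤ k) (p : Submodule K V) :
    finrank K ↥(k ⊓ p) + finrank K r ≤ finrank K k + finrank K ↥(p ⊓ r) := by
  have hinf : k ⊓ p ⊓ r = p ⊓ r := by
    rw [inf_assoc, inf_eq_right.mpr (inf_le_right.trans hrk)]
  have hsup := finrank_sup_add_finrank_inf_eq (k ⊓ p) r
  have := finrank_mono (sup_le (inf_le_left : k ⊓ p ≤ k) hrk)
  rw [hinf] at hsup
  omega

variable {X DX DU DV : Type*} [AddCommGroup X] [Module K X] [AddCommGroup DX] [Module K DX]
  [AddCommGroup DU] [Module K DU] [AddCommGroup DV] [Module K DV]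

/-- Rank form of the connecting map of `0 → ker σ → C → σ C → 0`: `σU` maps `f⁻¹ (ker σV)` onto
the cycles `ker δ ⊓ range σU`, and `ker f` onto a space containing the boundaries. -/
theorem finrank_ker_inf_range_add_finrank_map_range_le [FiniteDimensional K U]
    {f' : X →ₗ[K] U} {f : U →ₗ[K] V} {δ' : DX →ₗ[K] DU} {δ : DU →ₗ[K] DV}
    {σX : X →ₗ[K] DX} {σU : U →ₗ[K] DU} {σV : V →ₗ[K] DV} (hff' : f ∘ₗ f' = 0)
    (hσU : δ ∘ₗ σU = σV ∘ₗ f) (hσX : δ' ∘ₗ σX = σU ∘ₗ f') :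
    finrank K ↥(ker σV ⊓ range f) + finrank K ((range σX).map δ') ≤
      finrank K ((ker σU).map f) + finrank K ↥(ker δ ⊓ range σU) := by
  have hT : (ker σV).comap f = (ker δ).comap σU := by rw [← ker_comp, ← ker_comp, hσU]
  have hf := f.finrank_map_add_finrank_ker_inf ((ker σV).comap f)
  rw [map_comap_eq, inf_comm (range f), inf_eq_left.mpr (ker_le_comap f)] at hf
  have hσ := σU.finrank_map_add_finrank_ker_inf ((ker δ).comap σU)
  rw [map_comap_eq, inf_comm (range σU), inf_eq_left.mpr (ker_le_comap σU), ← hT] at hσ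
  have hfker := f.finrank_map_add_finrank_ker_inf (ker σU)
  have hσker := σU.finrank_map_add_finrank_ker_inf (ker f)
  rw [inf_comm] at hfker
  have hδ' : (range σX).map δ' ≤ (ker f).map σU := by
    rintro _ ⟨_, ⟨x, rfl⟩, rfl⟩
    exact ⟨f' x, LinearMap.congr_fun hff' x, (LinearMap.congr_fun hσX x).symm⟩
  have := finrank_mono hδ'
  omega

end LinearAlgebra

theorem Int.sum_Icc_add_le_sum_Icc_add {u v a : ℤ → ℤ} (h : ∀ i, u i + a i ≤ v i + a (i + 1))
    {m n : ℤ} (hmn : m ≤ n) :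
    ∑ i ∈ Finset.Icc m n, u i + a m ≤ ∑ i ∈ Finset.Icc m n, v i + a (n + 1) := by
  induction n, hmn using Int.leInduction with
  | base => simpa using h m
  | succ n hmn ih =>
    have hnotin : n + 1 ∉ Finset.Icc m n := by simp
    rw [← Finset.insert_Icc_right_eq_Icc_add_one (by omega), Finset.sum_insert hnotin,
      Finset.sum_insert hnotin]
    linarith [h (n + 1)]

section ChainComplex

variable {K : Type*} [DivisionRing K] {C D : ℤ → Type*}
  [∀ n, AddCommGroup (C n)] [∀ n, Module K (C n)] [∀ n, AddCommGroup (D n)] [∀ n, Module K (D n)]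
  (d : ∀ n, C (n + 1) →ₗ[K] C n)

/-- The dimension of the homology of the subcomplex `P` at `C (n + 1)`, the source of `d n`;
integer-valued, so the subtraction is not truncated. -/
noncomputable def homologyRank (P : ∀ n, Submodule K (C n)) (n : ℤ) : ℤ :=
  finrank K ↥(ker (d n) ⊓ P (n + 1)) - finrank K ((P (n + 1 + 1)).map (d (n + 1)))

variable {d}

theorem homologyRank_nonneg [∀ n, FiniteDimensional K (C n)] (hdd : ∀ n, d n ∘ₗ d (n + 1) = 0)
    {P : ∀ n, Submodule K (C n)} (hP : ∀ n, ∀ x ∈ P (n + 1), d n x ∈ P n) (n : ℤ) :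
    0 ≤ homologyRank d P n := by
  have hB : (P (n + 1 + 1)).map (d (n + 1)) ≤ ker (d n) ⊓ P (n + 1) := by
    rintro _ ⟨x, hx, rfl⟩
    exact ⟨LinearMap.congr_fun (hdd n) x, hP (n + 1) x hx⟩
  have := finrank_mono hB
  unfold homologyRank
  omega

theorem homologyRank_eq_zero_of_subsingleton (P : ∀ n, Submodule K (C n)) {n : ℤ}
    [Subsingleton (C (n + 1))] : homologyRank d P n = 0 := by
  simp [homologyRank, finrank_zero_of_subsingleton]

theorem homologyRank_sup [∀ n, FiniteDimensional K (C n)] {P Q : ∀ n, Submodule K (C n)}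
    (hP : ∀ n, ∀ x ∈ P (n + 1), d n x ∈ P n) (hQ : ∀ n, ∀ x ∈ Q (n + 1), d n x ∈ Q n)
    (hPQ : ∀ n, Disjoint (P n) (Q n)) (n : ℤ) :
    homologyRank d (fun n => P n ⊔ Q n) n = homologyRank d P n + homologyRank d Q n := by
  have hmapP : ∀ n, (P (n + 1)).map (d n) ≤ P n := fun n => map_le_iff_le_comap.mpr (hP n)
  have hmapQ : ∀ n, (Q (n + 1)).map (d n) ≤ Q n := fun n => map_le_iff_le_comap.mpr (hQ n)
  simp only [homologyRank]
  rw [ker_inf_sup_eq_of_disjoint (d n) (hmapP n) (hmapQ n) (hPQ n),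
    finrank_sup_of_disjoint ((hPQ (n + 1)).mono inf_le_right inf_le_right), Submodule.map_sup,
    finrank_sup_of_disjoint ((hPQ (n + 1)).mono (hmapP (n + 1)) (hmapQ (n + 1)))]
  push_cast
  ring

theorem homologyRank_ker_le [∀ n, FiniteDimensional K (C n)] {δ : ∀ n, D (n + 1) →ₗ[K] D n}
    {σ : ∀ n, C n →ₗ[K] D n} (hdd : ∀ n, d n ∘ₗ d (n + 1) = 0)
    (hσ : ∀ n, δ n ∘ₗ σ (n + 1) = σ n ∘ₗ d n) (n : ℤ) :
    homologyRank d (fun n => ker (σ n)) n ≤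
      homologyRank d (fun _ => ⊤) n + homologyRank δ (fun n => range (σ n)) (n + 1) := by
  have hcycles := finrank_inf_add_finrank_le (range_le_ker_iff.mpr (hdd n)) (ker (σ (n + 1)))
  have hconnecting := finrank_ker_inf_range_add_finrank_map_range_le (hdd (n + 1))
    (hσ (n + 1)) (hσ (n + 1 + 1))
  simp only [homologyRank]
  rw [inf_top_eq, Submodule.map_top]
  omega

theorem finrank_homology_restrict_eq [∀ n, FiniteDimensional K (C n)]
    (hdd : ∀ n, d n ∘ₗ d (n + 1) = 0) {P : ∀ n, Submodule K (C n)} (hP : ∀ n, ∀ x ∈ P (n + 1), d n x ∈ P n) (n : ℤ) :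
    (finrank K (↥(ker ((d n).restrict (hP n))) ⧸
      (range ((d (n + 1)).restrict (hP (n + 1)))).comap (ker ((d n).restrict (hP n))).subtype) : ℤ)
      = homologyRank d P n := by
  have hle : range ((d (n + 1)).restrict (hP (n + 1))) ≤ ker ((d n).restrict (hP n)) := by
    rintro _ ⟨x, rfl⟩
    ext
    exact LinearMap.congr_fun (hdd n) x
  rw [finrank_quotient_comap_subtype hle, ker_restrict, range_restrict, finrank_comap_subtype,
    finrank_comap_subtype, inf_eq_left.mpr (map_le_iff_le_comap.mpr (hP (n + 1)))]
  rfl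

theorem finrank_homology_eq [∀ n, FiniteDimensional K (C n)] (hdd : ∀ n, d n ∘ₗ d (n + 1) = 0)
    (n : ℤ) :
    (finrank K (↥(ker (d n)) ⧸ (range (d (n + 1))).comap (ker (d n)).subtype) : ℤ)
      = homologyRank d (fun _ => ⊤) n := by
  rw [finrank_quotient_comap_subtype (range_le_ker_iff.mpr (hdd n))]
  simp only [homologyRank]
  rw [inf_top_eq, Submodule.map_top]

end ChainComplex

theorem stmt3_general (N : ℕ) (C : ℤ → Type*)
    [∀ n, AddCommGroup (C n)] [∀ n, Module (ZMod 2) (C n)]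
    [∀ n, Module.Finite (ZMod 2) (C n)]
    (hvanish : ∀ n : ℤ, (n < 0 ∨ (N : ℤ) < n) → Subsingleton (C n))
    (d : ∀ n : ℤ, C (n + 1) →ₗ[ZMod 2] C n)
    (hdd : ∀ n : ℤ, (d n).comp (d (n + 1)) = 0)
    (τ : ∀ n : ℤ, C n →ₗ[ZMod 2] C n)
    (hcom : ∀ n : ℤ, (d n).comp (τ (n + 1)) = (τ n).comp (d n))
    (Fx : ∀ n : ℤ, Submodule (ZMod 2) (C n))
    (hFsub : ∀ n : ℤ, ∀ x ∈ Fx (n + 1), d n x ∈ Fx n)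
    (hfree1 : ∀ n : ℤ,
      Fx n ⊓ LinearMap.range (τ n + (LinearMap.id : C n →ₗ[ZMod 2] C n)) = ⊥)
    (hfree2 : ∀ n : ℤ,
      Fx n ⊔ LinearMap.range (τ n + (LinearMap.id : C n →ₗ[ZMod 2] C n)) =
        LinearMap.ker (τ n - (LinearMap.id : C n →ₗ[ZMod 2] C n))) :
    (∑ n ∈ Finset.Icc (-1 : ℤ) (N : ℤ), Module.finrank (ZMod 2)
        (↥(LinearMap.ker ((d n).restrict (hFsub n))) ⧸
          Submodule.comap (LinearMap.ker ((d n).restrict (hFsub n))).subtype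
            (LinearMap.range ((d (n + 1)).restrict (hFsub (n + 1)))))) ≤
    ∑ n ∈ Finset.Icc (-1 : ℤ) (N : ℤ), Module.finrank (ZMod 2)
        (↥(LinearMap.ker (d n)) ⧸
          Submodule.comap (LinearMap.ker (d n)).subtype
            (LinearMap.range (d (n + 1)))) := by
  set σ : ∀ n, C n →ₗ[ZMod 2] C n := fun n => τ n + LinearMap.id
  have hσ : ∀ n, d n ∘ₗ σ (n + 1) = σ n ∘ₗ d n := fun n => by
    simp only [σ, comp_add, add_comp, hcom, comp_id, id_comp]
  have hσC : ∀ n, ∀ x ∈ range (σ (n + 1)), d n x ∈ range (σ n) := by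
    rintro n _ ⟨y, rfl⟩
    exact ⟨d n y, (LinearMap.congr_fun (hσ n) y).symm⟩
  have hker : (fun n => ker (σ n)) = fun n => Fx n ⊔ range (σ n) := funext fun n => by
    rw [hfree2 n, ZModModule.sub_eq_add]
  have hstep : ∀ n, homologyRank d Fx n + homologyRank d (fun n => range (σ n)) n ≤
      homologyRank d (fun _ => ⊤) n + homologyRank d (fun n => range (σ n)) (n + 1) := by
    intro n
    rw [← homologyRank_sup hFsub hσC (fun n => disjoint_iff.mpr (hfree1 n)), ← hker]
    exact homologyRank_ker_le hdd hσ n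
  have hsum := Int.sum_Icc_add_le_sum_Icc_add hstep (show (-1 : ℤ) ≤ N by omega)
  have hbot := homologyRank_nonneg (P := fun n => range (σ n)) hdd hσC (-1)
  have htop : homologyRank d (fun n => range (σ n)) (N + 1) = 0 :=
    have := hvanish (N + 1 + 1) (Or.inr (by omega))
    homologyRank_eq_zero_of_subsingleton _
  zify
  rw [Finset.sum_congr rfl fun n _ => finrank_homology_restrict_eq hdd hFsub n,
    Finset.sum_congr rfl fun n _ => finrank_homology_eq hdd n]
  linarith

/-- Smith inequality.  Since singular homology of topological spaces is
not available in Mathlib, we formalize the finite ℤ/2-CW complex `X` through its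
equivariant cellular chain complex over `𝔽₂ = ZMod 2`: a bounded chain complex
`C` of finite-dimensional `𝔽₂`-vector spaces with a chain involution `τ`
(the cellular ℤ/2-action), whose fixed subcomplex `Fx` corresponds to the
fixed-point set `X^{ℤ/2}` (the cells are permuted freely away from the fixed
subcomplex: `Fx n ⊓ im (1+τ) = ⊥` and `Fx n ⊔ im (1+τ) = ker (τ - 1)`).
The conclusion is the Smith inequality: the total dimension of the homology of the
fixed subcomplex (computing `H_*(X^{ℤ/2}; 𝔽₂)`) is at most the total dimension of
the homology of `C` (computing `H_*(X; 𝔽₂)`). -/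
theorem stmt3 (N : ℕ) (C : ℤ → Type*)
    [∀ n, AddCommGroup (C n)] [∀ n, Module (ZMod 2) (C n)]
    [∀ n, Module.Finite (ZMod 2) (C n)]
    (hvanish : ∀ n : ℤ, (n < 0 ∨ (N : ℤ) < n) → Subsingleton (C n))
    (d : ∀ n : ℤ, C (n + 1) →ₗ[ZMod 2] C n)
    (hdd : ∀ n : ℤ, (d n).comp (d (n + 1)) = 0)
    (τ : ∀ n : ℤ, C n →ₗ[ZMod 2] C n)
    (hτ : ∀ n : ℤ, (τ n).comp (τ n) = LinearMap.id)
    (hcom : ∀ n : ℤ, (d n).comp (τ (n + 1)) = (τ n).comp (d n))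
    (Fx : ∀ n : ℤ, Submodule (ZMod 2) (C n))
    (hFfix : ∀ n : ℤ, ∀ x ∈ Fx n, τ n x = x)
    (hFsub : ∀ n : ℤ, ∀ x ∈ Fx (n + 1), d n x ∈ Fx n)
    (hfree1 : ∀ n : ℤ,
      Fx n ⊓ LinearMap.range (τ n + (LinearMap.id : C n →ₗ[ZMod 2] C n)) = ⊥)
    (hfree2 : ∀ n : ℤ,
      Fx n ⊔ LinearMap.range (τ n + (LinearMap.id : C n →ₗ[ZMod 2] C n)) =
        LinearMap.ker (τ n - (LinearMap.id : C n →ₗ[ZMod 2] C n))) :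
    (∑ n ∈ Finset.Icc (-1 : ℤ) (N : ℤ), Module.finrank (ZMod 2)
        (↥(LinearMap.ker ((d n).restrict (hFsub n))) ⧸
          Submodule.comap (LinearMap.ker ((d n).restrict (hFsub n))).subtype
            (LinearMap.range ((d (n + 1)).restrict (hFsub (n + 1)))))) ≤
    ∑ n ∈ Finset.Icc (-1 : ℤ) (N : ℤ), Module.finrank (ZMod 2)
        (↥(LinearMap.ker (d n)) ⧸
          Submodule.comap (LinearMap.ker (d n)).subtype
            (LinearMap.range (d (n + 1)))) :=
  stmt3_general N C hvanish d hdd τ hcom Fx hFsub hfree1 hfree2
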